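/- arXiv:2206.09673 — 3 statements merged into one kernel-verified Lean document; each statement's English description precedes it below -/
import Mathlib

section
/- Let μ be a nonadditive measure and K ≥ 1. Then μ is K-relaxed subadditive (i.e., μ(A∪B) ≤ K(μ(A)+μ(B)) for all disjoint A,B ∈ 𝒜) if and only if the Sugeno integral is K-relaxed subadditive, i.e., Su(μ, f+g) ≤ K(Su(μ,f) + Su(μ,g)) for all measurable f,g : X → [0,∞). In particular, the Sugeno integral is subadditive if and only if μ is subadditive. -/
/-!
If `Su μ f + Su μ g < t`, split `t ≥ s₁ + s₂` with `Su μ f < s₁` and `Su μ g < s₂`. Then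
`{f + g > t} ⊆ {f > s₁} ∪ {g > s₂}`, and `μ {f > s₁} ≤ Su μ f` because `min s₁ (μ {f > s₁}) ≤ Su μ f`
with `s₁` too large to be the minimum; relaxed subadditivity of `μ` then bounds `μ {f + g > t}`.
Conversely, for indicators of `A` and `B` of height `c > t` the superlevel set of the sum at `t`
is `A ∪ B`, so `min t (μ (A ∪ B)) ≤ Su μ (f + g)`, while `Su μ f ≤ μ A` and `Su μ g ≤ μ B`;
let `t → ∞`.
-/

open scoped NNReal ENNReal
open ENNReal Filter Topology

variable {X : Type*} [MeasurableSpace X]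

/-- The Sugeno integral of `g` w.r.t. a nonadditive measure `μ`:
`Su(μ,g) := sup_{t ∈ [0,∞)} min(t, μ({g > t}))`. -/
noncomputable def Su (μ : Set X → ℝ≥0∞) (g : X → ℝ≥0∞) : ℝ≥0∞ :=
  ⨆ t : ℝ≥0, min (t : ℝ≥0∞) (μ {x | (t : ℝ≥0∞) < g x})

theorem ENNReal.iSup_min_coe (m : ℝ≥0∞) : ⨆ t : ℝ≥0, min (t : ℝ≥0∞) m = m :=
  le_antisymm (iSup_le fun _ => min_le_right _ _) <| ENNReal.le_of_forall_nnreal_lt fun r hr =>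
    le_iSup_of_le r (le_min le_rfl hr.le)

theorem ENNReal.exists_nnreal_lt_lt_add_le {a b : ℝ≥0∞} {t : ℝ≥0} (h : a + b < t) :
    ∃ s₁ s₂ : ℝ≥0, a < s₁ ∧ b < s₂ ∧ (s₁ : ℝ≥0∞) + s₂ ≤ t := by
  lift a to ℝ≥0 using (le_self_add.trans_lt h).ne_top
  lift b to ℝ≥0 using (le_add_self.trans_lt h).ne_top
  have hab : a + b < t := mod_cast h
  obtain ⟨s₁, has₁, hs₁t⟩ := exists_between (lt_tsub_iff_right.2 hab)
  refine ⟨s₁, t - s₁, mod_cast has₁, mod_cast lt_tsub_iff_left.2 (lt_tsub_iff_right.1 hs₁t), ?_⟩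
  exact mod_cast (add_tsub_cancel_of_le (hs₁t.le.trans tsub_le_self)).le

theorem Set.setOf_lt_indicator_add_indicator {α : Type*} {A B : Set α} {c t : ℝ≥0∞}
    (ht : t < c) :
    {x | t < A.indicator (fun _ => c) x + B.indicator (fun _ => c) x} = A ∪ B := by
  ext x
  by_cases hA : x ∈ A <;> by_cases hB : x ∈ B <;>
    simp [hA, hB, ht, ht.trans_le le_self_add]

section Sugeno

variable {α : Type*} {μ : Set α → ℝ≥0∞} {f : α → ℝ≥0∞}

theorem min_le_Su (μ : Set α → ℝ≥0∞) (f : α → ℝ≥0∞) (t : ℝ≥0) :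
    min (t : ℝ≥0∞) (μ {x | (t : ℝ≥0∞) < f x}) ≤ Su μ f :=
  le_iSup (fun t : ℝ≥0 => min (t : ℝ≥0∞) (μ {x | (t : ℝ≥0∞) < f x})) t

theorem measure_superlevel_le_Su_of_Su_lt {s : ℝ≥0} (hs : Su μ f < s) :
    μ {x | (s : ℝ≥0∞) < f x} ≤ Su μ f :=
  (min_le_iff.1 (min_le_Su μ f s)).resolve_left hs.not_ge

end Sugeno

section RelaxedSubadditive

variable {μ : Set X → ℝ≥0∞} {K : ℝ≥0∞}

def MonotoneOnMeasurableSets (μ : Set X → ℝ≥0∞) : Prop :=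
  ∀ ⦃A B : Set X⦄, MeasurableSet A → MeasurableSet B → A ⊆ B → μ A ≤ μ B

def RelaxedSubadditive (μ : Set X → ℝ≥0∞) (K : ℝ≥0∞) : Prop :=
  ∀ A B : Set X, MeasurableSet A → MeasurableSet B → Disjoint A B →
    μ (A ∪ B) ≤ K * (μ A + μ B)

theorem RelaxedSubadditive.union_le (hmono : MonotoneOnMeasurableSets μ)
    (h : RelaxedSubadditive μ K) {A B : Set X} (hA : MeasurableSet A) (hB : MeasurableSet B) :
    μ (A ∪ B) ≤ K * (μ A + μ B) :=
  calc μ (A ∪ B) = μ (A ∪ B \ A) := by rw [Set.union_sdiff_self]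
    _ ≤ K * (μ A + μ (B \ A)) := h A (B \ A) hA (hB.diff hA) disjoint_sdiff_self_right
    _ ≤ K * (μ A + μ B) := by gcongr; exact hmono (hB.diff hA) hB Set.sdiff_subset

theorem Su_le_of_support_subset (hmono : MonotoneOnMeasurableSets μ) {f : X → ℝ≥0∞}
    {A : Set X} (hA : MeasurableSet A) (hf : Measurable f) (hfA : Function.support f ⊆ A) :
    Su μ f ≤ μ A :=
  iSup_le fun _ => (min_le_right _ _).trans <|
    hmono (measurableSet_lt measurable_const hf) hA fun _ hx => hfA (ne_bot_of_gt hx)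

theorem Su_add_le_of_relaxedSubadditive (hmono : MonotoneOnMeasurableSets μ)
    (h : RelaxedSubadditive μ K) (hK : 1 ≤ K) {f g : X → ℝ≥0∞} (hf : Measurable f)
    (hg : Measurable g) : Su μ (fun x => f x + g x) ≤ K * (Su μ f + Su μ g) := by
  refine iSup_le fun t => ?_
  rcases le_or_gt (t : ℝ≥0∞) (Su μ f + Su μ g) with ht | ht
  · exact (min_le_left _ _).trans (ht.trans (le_mul_of_one_le_left' hK))
  obtain ⟨s₁, s₂, hs₁, hs₂, hst⟩ := ENNReal.exists_nnreal_lt_lt_add_le ht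
  have hcover : {x | (t : ℝ≥0∞) < f x + g x} ⊆
      {x | (s₁ : ℝ≥0∞) < f x} ∪ {x | (s₂ : ℝ≥0∞) < g x} := by
    intro x hx
    by_contra hx'
    simp only [Set.mem_union, Set.mem_ofPred_eq, not_or, not_lt] at hx'
    exact (add_le_add hx'.1 hx'.2).trans hst |>.not_gt hx
  have hf₁ : MeasurableSet {x | (s₁ : ℝ≥0∞) < f x} := measurableSet_lt measurable_const hf
  have hg₂ : MeasurableSet {x | (s₂ : ℝ≥0∞) < g x} := measurableSet_lt measurable_const hg
  calc min (t : ℝ≥0∞) (μ {x | (t : ℝ≥0∞) < f x + g x})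
      ≤ μ ({x | (s₁ : ℝ≥0∞) < f x} ∪ {x | (s₂ : ℝ≥0∞) < g x}) :=
        (min_le_right _ _).trans <|
          hmono (measurableSet_lt measurable_const (hf.add hg)) (hf₁.union hg₂) hcover
    _ ≤ K * (μ {x | (s₁ : ℝ≥0∞) < f x} + μ {x | (s₂ : ℝ≥0∞) < g x}) :=
        h.union_le hmono hf₁ hg₂
    _ ≤ K * (Su μ f + Su μ g) := by
        gcongr
        exacts [measure_superlevel_le_Su_of_Su_lt hs₁, measure_superlevel_le_Su_of_Su_lt hs₂]

theorem relaxedSubadditive_of_Su_add_le (hmono : MonotoneOnMeasurableSets μ)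
    (h : ∀ f g : X → ℝ≥0, Measurable f → Measurable g →
      Su μ (fun x => (f x : ℝ≥0∞) + g x) ≤ K * (Su μ (fun x => f x) + Su μ (fun x => g x))) :
    RelaxedSubadditive μ K := by
  intro A B hA hB _
  rw [← ENNReal.iSup_min_coe (μ (A ∪ B))]
  refine iSup_le fun t => ?_
  have hsum := h (A.indicator fun _ => t + 1) (B.indicator fun _ => t + 1)
    (measurable_const.indicator hA) (measurable_const.indicator hB)
  simp only [ENNReal.coe_indicator] at hsum
  have hSu {C : Set X} (hC : MeasurableSet C) :
      Su μ (C.indicator fun _ => ((t + 1 : ℝ≥0) : ℝ≥0∞)) ≤ μ C :=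
    Su_le_of_support_subset hmono hC (measurable_const.indicator hC)
      Set.support_indicator_subset
  calc min (t : ℝ≥0∞) (μ (A ∪ B))
      = min (t : ℝ≥0∞) (μ {x | (t : ℝ≥0∞) < A.indicator (fun _ => ((t + 1 : ℝ≥0) : ℝ≥0∞)) x
          + B.indicator (fun _ => ((t + 1 : ℝ≥0) : ℝ≥0∞)) x}) := by
        rw [Set.setOf_lt_indicator_add_indicator (mod_cast lt_add_one t)]
    _ ≤ _ := min_le_Su _ _ t
    _ ≤ _ := hsum
    _ ≤ K * (μ A + μ B) := by gcongr <;> exact hSu ‹_›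

theorem relaxedSubadditive_iff_Su_add_le (hmono : MonotoneOnMeasurableSets μ) (hK : 1 ≤ K) :
    RelaxedSubadditive μ K ↔ ∀ f g : X → ℝ≥0, Measurable f → Measurable g →
      Su μ (fun x => (f x : ℝ≥0∞) + g x) ≤ K * (Su μ (fun x => f x) + Su μ (fun x => g x)) :=
  ⟨fun h _ _ hf hg => Su_add_le_of_relaxedSubadditive hmono h hK hf.coe_nnreal_ennreal
    hg.coe_nnreal_ennreal, relaxedSubadditive_of_Su_add_le hmono⟩

end RelaxedSubadditive

theorem sugeno_relaxed_subadditive_iff_general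
    (μ : Set X → ℝ≥0∞)
    (hmono : ∀ ⦃A B : Set X⦄, MeasurableSet A → MeasurableSet B → A ⊆ B → μ A ≤ μ B)
    (K : ℝ≥0) (hK : 1 ≤ K) :
    ((∀ A B : Set X, MeasurableSet A → MeasurableSet B → Disjoint A B →
        μ (A ∪ B) ≤ (K : ℝ≥0∞) * (μ A + μ B)) ↔
      (∀ f g : X → ℝ≥0, Measurable f → Measurable g →
        Su μ (fun x => ((f x : ℝ≥0∞) + (g x : ℝ≥0∞))) ≤
          (K : ℝ≥0∞) * (Su μ (fun x => (f x : ℝ≥0∞)) + Su μ (fun x => (g x : ℝ≥0∞))))) ∧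
    ((∀ A B : Set X, MeasurableSet A → MeasurableSet B → Disjoint A B →
        μ (A ∪ B) ≤ μ A + μ B) ↔
      (∀ f g : X → ℝ≥0, Measurable f → Measurable g →
        Su μ (fun x => ((f x : ℝ≥0∞) + (g x : ℝ≥0∞))) ≤
          Su μ (fun x => (f x : ℝ≥0∞)) + Su μ (fun x => (g x : ℝ≥0∞)))) :=
  ⟨relaxedSubadditive_iff_Su_add_le hmono (mod_cast hK), by
    simpa [RelaxedSubadditive] using relaxedSubadditive_iff_Su_add_le hmono le_rfl⟩

/-- `μ` is `K`-relaxed subadditive iff the Sugeno integral is `K`-relaxed subadditive;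
in particular, the Sugeno integral is subadditive iff `μ` is subadditive. -/
theorem sugeno_relaxed_subadditive_iff
    (μ : Set X → ℝ≥0∞) (h0 : μ ∅ = 0)
    (hmono : ∀ ⦃A B : Set X⦄, MeasurableSet A → MeasurableSet B → A ⊆ B → μ A ≤ μ B)
    (K : ℝ≥0) (hK : 1 ≤ K) :
    ((∀ A B : Set X, MeasurableSet A → MeasurableSet B → Disjoint A B →
        μ (A ∪ B) ≤ (K : ℝ≥0∞) * (μ A + μ B)) ↔
      (∀ f g : X → ℝ≥0, Measurable f → Measurable g →
        Su μ (fun x => ((f x : ℝ≥0∞) + (g x : ℝ≥0∞))) ≤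
          (K : ℝ≥0∞) * (Su μ (fun x => (f x : ℝ≥0∞)) + Su μ (fun x => (g x : ℝ≥0∞))))) ∧
    ((∀ A B : Set X, MeasurableSet A → MeasurableSet B → Disjoint A B →
        μ (A ∪ B) ≤ μ A + μ B) ↔
      (∀ f g : X → ℝ≥0, Measurable f → Measurable g →
        Su μ (fun x => ((f x : ℝ≥0∞) + (g x : ℝ≥0∞))) ≤
          Su μ (fun x => (f x : ℝ≥0∞)) + Su μ (fun x => (g x : ℝ≥0∞)))) :=
  sugeno_relaxed_subadditive_iff_general μ hmono K hK
end

section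
/- Let μ be a nonadditive measure and 0 < p,q < ∞. For any measurable f and any α ∈ ℝ, the Sugeno-Lorentz prenorm satisfies (αf)_{p,q} ≤ max(1, |α|) · (f)_{p,q} (truncated subhomogeneity). -/
open scoped NNReal ENNReal
open ENNReal Filter Topology

variable {X : Type*} [MeasurableSpace X]

/-- The Sugeno-Lorentz prenorm `(f)_{p,q} := (Su(μ^{p/q}, (p/q)|f|^q))^{1/q}`. -/
noncomputable def SL (μ : Set X → ℝ≥0∞) (p q : ℝ) (f : X → ℝ) : ℝ≥0∞ :=
  (Su (fun A => μ A ^ (p / q)) (fun x => ENNReal.ofReal ((p / q) * |f x| ^ q))) ^ (1 / q)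

/-! Scaling `g` by `k ∈ (0, ∞)` turns the level `t` of `Su(ν, k g)` into the level
`t / k` of `Su(ν, g)`, and `min(t, m) ≤ max(1, k) · min(t / k, m)`. Hence the Sugeno integral is
subhomogeneous with constant `max(1, k)`; applying this with `k = |α|^q` and taking `q`-th roots
gives the constant `max(1, |α|)`. -/

omit [MeasurableSpace X] in
theorem min_le_Su_s8 (ν : Set X → ℝ≥0∞) (g : X → ℝ≥0∞) {t : ℝ≥0∞} (ht : t ≠ ∞) :
    min t (ν {x | t < g x}) ≤ Su ν g := by
  lift t to ℝ≥0 using ht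
  exact le_iSup (fun s : ℝ≥0 => min (s : ℝ≥0∞) (ν {x | (s : ℝ≥0∞) < g x})) t

theorem ENNReal.min_le_max_one_mul_min_div {k : ℝ≥0∞} (hk0 : k ≠ 0) (hk : k ≠ ∞) (t m : ℝ≥0∞) :
    min t m ≤ max 1 k * min (t / k) m := by
  rw [(mul_right_mono : Monotone (max 1 k * ·)).map_min]
  refine min_le_min ?_ (le_mul_of_one_le_left' (le_max_left _ _))
  calc t = k * (t / k) := (ENNReal.mul_div_cancel hk0 hk).symm
    _ ≤ max 1 k * (t / k) := mul_le_mul_left (le_max_right _ _) _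

omit [MeasurableSpace X] in
theorem Su_const_mul_le {ν : Set X → ℝ≥0∞} (hν : ν ∅ = 0) (g : X → ℝ≥0∞) {k : ℝ≥0∞}
    (hk : k ≠ ∞) : Su ν (fun x => k * g x) ≤ max 1 k * Su ν g := by
  refine iSup_le fun t => ?_
  rcases eq_or_ne k 0 with rfl | hk0
  · simp [hν]
  have hlevel : {x | (t : ℝ≥0∞) < k * g x} = {x | (t : ℝ≥0∞) / k < g x} := by
    ext x
    simp only [Set.mem_ofPred_eq]
    rw [ENNReal.div_lt_iff (Or.inl hk0) (Or.inl hk), mul_comm]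
  rw [hlevel]
  exact (min_le_max_one_mul_min_div hk0 hk _ _).trans <| mul_le_mul_right
    (min_le_Su_s8 ν g (ENNReal.div_lt_top coe_ne_top hk0).ne) _

theorem ENNReal.max_one_rpow {r : ℝ} (hr : 0 ≤ r) (k : ℝ≥0∞) :
    max 1 k ^ r = max 1 (k ^ r) := by
  rw [(ENNReal.monotone_rpow_of_nonneg hr).map_max, ENNReal.one_rpow]

theorem ofReal_mul_abs_mul_rpow (c α y : ℝ) {q : ℝ} :
    ENNReal.ofReal (c * |α * y| ^ q) = ENNReal.ofReal (|α| ^ q) * ENNReal.ofReal (c * |y| ^ q) := by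
  rw [← ENNReal.ofReal_mul (by positivity), abs_mul,
    Real.mul_rpow (abs_nonneg _) (abs_nonneg _), mul_left_comm]

theorem SL_truncated_subhomogeneous_general
    (μ : Set X → ℝ≥0∞) (h0 : μ ∅ = 0)
    (p q : ℝ) (hp : 0 < p) (hq : 0 < q) (f : X → ℝ) (α : ℝ) :
    SL μ p q (fun x => α * f x) ≤ max 1 (ENNReal.ofReal |α|) * SL μ p q f := by
  have hν : (fun A => μ A ^ (p / q)) ∅ = 0 := by
    simp [h0, ENNReal.zero_rpow_of_pos (div_pos hp hq)]
  have hroot : ENNReal.ofReal (|α| ^ q) ^ (1 / q) = ENNReal.ofReal |α| := by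
    rw [ENNReal.ofReal_rpow_of_nonneg (by positivity) (by positivity),
      ← Real.rpow_mul (abs_nonneg α), mul_one_div_cancel hq.ne', Real.rpow_one]
  simp only [SL, ofReal_mul_abs_mul_rpow]
  calc _ ≤ (max 1 (ENNReal.ofReal (|α| ^ q)) * Su _ _) ^ (1 / q) :=
        ENNReal.rpow_le_rpow (Su_const_mul_le hν _ ofReal_ne_top) (by positivity)
    _ = _ := by
        rw [ENNReal.mul_rpow_of_nonneg _ _ (by positivity),
          ENNReal.max_one_rpow (by positivity), hroot]

/-- Truncated subhomogeneity of the Sugeno-Lorentz prenorm: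
`(αf)_{p,q} ≤ max(1, |α|)·(f)_{p,q}`. -/
theorem SL_truncated_subhomogeneous
    (μ : Set X → ℝ≥0∞) (h0 : μ ∅ = 0)
    (hmono : ∀ ⦃A B : Set X⦄, MeasurableSet A → MeasurableSet B → A ⊆ B → μ A ≤ μ B)
    (p q : ℝ) (hp : 0 < p) (hq : 0 < q) (f : X → ℝ) (hf : Measurable f) (α : ℝ) :
    SL μ p q (fun x => α * f x) ≤ max 1 (ENNReal.ofReal |α|) * SL μ p q f :=
  SL_truncated_subhomogeneous_general μ h0 p q hp hq f α
end

section
/- A nonadditive measure μ is weakly null-additive if and only if the Sugeno-Lorentz prenorm (·)_{p,q} is weakly null-additive, i.e., (f+g)_{p,q} = 0 whenever (f)_{p,q} = (g)_{p,q} = 0. -/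
/-!
A function has prenorm zero exactly when all its level sets `{c < |f|}`, `c > 0`, are `μ`-null,
since `u ↦ (p/q) u^q` is an order isomorphism of `[0, ∞)`. Then `{c < |f + g|}` lies in
`{c/2 < |f|} ∪ {c/2 < |g|}`, which gives one direction by monotonicity, and the indicator
functions of `A`, `B` and their sum `1_A + 1_B`, whose level set at `1/2` is `A ∪ B`, give the other.
-/

open scoped NNReal ENNReal
open ENNReal Filter Topology

variable {X : Type*} [MeasurableSpace X]

theorem Su_eq_zero_iff {α : Type*} (ν : Set α → ℝ≥0∞) (g : α → ℝ≥0∞) :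
    Su ν g = 0 ↔ ∀ t : ℝ≥0, 0 < t → ν {x | (t : ℝ≥0∞) < g x} = 0 := by
  refine iSup_eq_zero.trans (forall_congr' fun t => ?_)
  rw [← bot_eq_zero, min_eq_bot, bot_eq_zero, coe_eq_zero, pos_iff_ne_zero,
    or_iff_not_imp_left]

theorem coe_lt_ofReal_mul_rpow_iff {r q : ℝ} (hr : 0 < r) (hq : 0 < q) (t : ℝ≥0) {u : ℝ}
    (hu : 0 ≤ u) : (t : ℝ≥0∞) < ENNReal.ofReal (r * u ^ q) ↔ ((t : ℝ) / r) ^ q⁻¹ < u := by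
  rw [lt_ofReal_iff_toReal_lt coe_ne_top, coe_toReal, ← div_lt_iff₀' hr,
    Real.rpow_inv_lt_iff_of_pos (by positivity) hu hq]

theorem SL_eq_zero_iff {α : Type*} (μ : Set α → ℝ≥0∞) {p q : ℝ} (hp : 0 < p) (hq : 0 < q)
    (f : α → ℝ) :
    SL μ p q f = 0 ↔ ∀ c : ℝ, 0 < c → μ {x | c < |f x|} = 0 := by
  have hr : 0 < p / q := div_pos hp hq
  have hlevel (t : ℝ≥0) : {x | (t : ℝ≥0∞) < ENNReal.ofReal (p / q * |f x| ^ q)} =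
      {x | ((t : ℝ) / (p / q)) ^ q⁻¹ < |f x|} :=
    Set.ext fun x => coe_lt_ofReal_mul_rpow_iff hr hq t (abs_nonneg _)
  simp only [SL, rpow_eq_zero_iff_of_pos (one_div_pos.mpr hq), Su_eq_zero_iff,
    rpow_eq_zero_iff_of_pos hr, hlevel]
  constructor
  · intro h c hc
    have hc' : 0 < p / q * c ^ q := by positivity
    have := h _ (Real.toNNReal_pos.mpr hc')
    rwa [Real.coe_toNNReal _ hc'.le, mul_div_cancel_left₀ _ hr.ne',
      Real.rpow_rpow_inv hc.le hq.ne'] at this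
  · exact fun h t ht => h _ (by positivity)

theorem measurableSet_lt_abs {f : X → ℝ} (hf : Measurable f) (c : ℝ) :
    MeasurableSet {x | c < |f x|} :=
  measurableSet_lt measurable_const hf.abs

theorem setOf_lt_abs_add_subset {α : Type*} (f g : α → ℝ) (c : ℝ) :
    {x | c < |(f + g) x|} ⊆ {x | c / 2 < |f x|} ∪ {x | c / 2 < |g x|} := by
  intro x hx
  by_contra hx'
  simp only [Set.mem_union, Set.mem_ofPred_eq, Pi.add_apply, not_or, not_lt] at hx hx'
  linarith [abs_add_le (f x) (g x)]

theorem setOf_lt_abs_indicator_subset {α : Type*} (S : Set α) {c : ℝ} (hc : 0 ≤ c) :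
    {x | c < |S.indicator (1 : α → ℝ) x|} ⊆ S := by
  intro x hx
  by_contra hxS
  rw [Set.mem_ofPred_eq, Set.indicator_of_notMem hxS, abs_zero] at hx
  exact hx.not_ge hc

theorem union_subset_setOf_lt_indicator_add_indicator {α : Type*} (A B : Set α) :
    A ∪ B ⊆ {x | 1 / 2 < |(A.indicator (1 : α → ℝ) + B.indicator (1 : α → ℝ)) x|} := by
  intro x hx
  have hA : 0 ≤ A.indicator (1 : α → ℝ) x := Set.indicator_nonneg (fun _ _ => zero_le_one) x
  have hB : 0 ≤ B.indicator (1 : α → ℝ) x := Set.indicator_nonneg (fun _ _ => zero_le_one) x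
  rw [Set.mem_ofPred_eq, Pi.add_apply, abs_of_nonneg (add_nonneg hA hB)]
  rcases hx with hx | hx
  · rw [Set.indicator_of_mem hx, Pi.one_apply]
    linarith
  · rw [Set.indicator_of_mem hx (1 : α → ℝ), Pi.one_apply]
    linarith

theorem SL_weakly_null_additive_iff_general
    (μ : Set X → ℝ≥0∞)
    (hmono : ∀ ⦃A B : Set X⦄, MeasurableSet A → MeasurableSet B → A ⊆ B → μ A ≤ μ B)
    (p q : ℝ) (hp : 0 < p) (hq : 0 < q) :
    (∀ A B : Set X, MeasurableSet A → MeasurableSet B → μ A = 0 → μ B = 0 →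
        μ (A ∪ B) = 0) ↔
      (∀ f g : X → ℝ, Measurable f → Measurable g → SL μ p q f = 0 → SL μ p q g = 0 →
        SL μ p q (f + g) = 0) := by
  have null_of_subset {A B : Set X} (hA : MeasurableSet A) (hB : MeasurableSet B) (hAB : A ⊆ B)
      (hB0 : μ B = 0) : μ A = 0 :=
    nonpos_iff_eq_zero.mp (hB0 ▸ hmono hA hB hAB)
  simp only [SL_eq_zero_iff μ hp hq]
  constructor
  · intro hμ f g hf hg hf0 hg0 c hc
    have hlevel_f := measurableSet_lt_abs hf (c / 2)
    have hlevel_g := measurableSet_lt_abs hg (c / 2)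
    exact null_of_subset (measurableSet_lt_abs (hf.add hg) c) (hlevel_f.union hlevel_g)
      (setOf_lt_abs_add_subset f g c)
      (hμ _ _ hlevel_f hlevel_g (hf0 _ (half_pos hc)) (hg0 _ (half_pos hc)))
  · intro h A B hA hB hA0 hB0
    have hind {S : Set X} (hS : MeasurableSet S) : Measurable (S.indicator (1 : X → ℝ)) :=
      measurable_const.indicator hS
    have hnull {S : Set X} (hS : MeasurableSet S) (hS0 : μ S = 0) (c : ℝ) (hc : 0 < c) :
        μ {x | c < |S.indicator (1 : X → ℝ) x|} = 0 :=
      null_of_subset (measurableSet_lt_abs (hind hS) c) hS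
        (setOf_lt_abs_indicator_subset S hc.le) hS0
    exact null_of_subset (hA.union hB) (measurableSet_lt_abs ((hind hA).add (hind hB)) _)
      (union_subset_setOf_lt_indicator_add_indicator A B)
      (h _ _ (hind hA) (hind hB) (hnull hA hA0) (hnull hB hB0) _ one_half_pos)

/-- `μ` is weakly null-additive iff the Sugeno-Lorentz prenorm is weakly null-additive. -/
theorem SL_weakly_null_additive_iff
    (μ : Set X → ℝ≥0∞) (h0 : μ ∅ = 0)
    (hmono : ∀ ⦃A B : Set X⦄, MeasurableSet A → MeasurableSet B → A ⊆ B → μ A ≤ μ B)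
    (p q : ℝ) (hp : 0 < p) (hq : 0 < q) :
    (∀ A B : Set X, MeasurableSet A → MeasurableSet B → μ A = 0 → μ B = 0 →
        μ (A ∪ B) = 0) ↔
      (∀ f g : X → ℝ, Measurable f → Measurable g → SL μ p q f = 0 → SL μ p q g = 0 →
        SL μ p q (f + g) = 0) :=
  SL_weakly_null_additive_iff_general μ hmono p q hp hq
end
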